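/- Replacing a multiple edge by a single edge does not change the homology of the complex of connected subgraphs: if e and e′ are two distinct edges of a connected multigraph Γ with the same (unordered) pair of endpoints, then H_i(C_conn(Γ)) ≅ H_i(C_conn(Γ∖e)) for every i, where Γ∖e denotes the multigraph obtained from Γ by deleting the edge e. -/

import Mathlib

/-!
Statement 11. Replacing a multiple edge by a single edge does not change the homology of
the complex of connected subgraphs: if `e` and `e'` are distinct edges of a connected
multigraph `Γ` with the same endpoints, then `H_i(C_conn(Γ)) ≅ H_i(C_conn(Γ∖e))` for every
`i`, where `Γ∖e` is obtained from `Γ` by deleting the edge `e`.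
-/

noncomputable section

open scoped Classical

variable {V E : Type}

/-- One step of a walk: `x` and `y` are joined by an edge of `S`. -/
def StepRel (ends : E → Sym2 V) (S : Finset E) (x y : V) : Prop :=
  ∃ e ∈ S, ends e = s(x, y)

/-- The spanning subgraph `(V, S)` is connected. -/
def IsConn (ends : E → Sym2 V) (S : Finset E) : Prop :=
  ∀ a b : V, Relation.ReflTransGen (StepRel ends S) a b

/-- Connected spanning subgraphs with `i` edges: the basis of `C_conn(Γ)_i`. -/
def ConnSub (ends : E → Sym2 V) (i : ℕ) : Type _ :=
  {S : Finset E // S.card = i ∧ IsConn ends S}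

/-- The degree-`i` chain group of the complex of connected subgraphs. -/
abbrev CConn (ends : E → Sym2 V) (i : ℕ) : Type _ :=
  ConnSub ends i →₀ ℤ

/-- `ν(e, S)`: the number of edges of `S` strictly preceding `e`. -/
def nuEdge [LinearOrder E] (e : E) (S : Finset E) : ℕ :=
  (S.filter fun f => f < e).card

/-- The differential of `C_conn(Γ)`:
`d(S) = Σ (−1)^{ν(e,S)} (S∖{e})`, the sum over those `e ∈ S` whose removal keeps `(V, S∖{e})`
connected. -/
noncomputable def bdry [DecidableEq E] [LinearOrder E] (ends : E → Sym2 V) (i : ℕ) :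
    CConn ends (i + 1) →ₗ[ℤ] CConn ends i :=
  Finsupp.lsum ℤ fun S : ConnSub ends (i + 1) =>
    LinearMap.toSpanSingleton ℤ (CConn ends i)
      (∑ e ∈ S.1.attach,
        if h : IsConn ends (S.1.erase e.1) then
          ((-1 : ℤ) ^ nuEdge e.1 S.1) •
            Finsupp.single
              (⟨S.1.erase e.1, by simp [Finset.card_erase_of_mem e.2, S.2.1], h⟩ :
                ConnSub ends i) 1
        else 0)

/-- `H_0` of the complex of connected subgraphs. -/
abbrev ConnH0 [DecidableEq E] [LinearOrder E] (ends : E → Sym2 V) : Type _ :=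
  CConn ends 0 ⧸ LinearMap.range (bdry ends 0)

/-- `H_{i+1}` of the complex of connected subgraphs. -/
abbrev ConnH [DecidableEq E] [LinearOrder E] (ends : E → Sym2 V) (i : ℕ) : Type _ :=
  ↥(LinearMap.ker (bdry ends i)) ⧸
    Submodule.comap (LinearMap.ker (bdry ends i)).subtype
      (LinearMap.range (bdry ends (i + 1)))

/-!
Write `Γ' = Γ ∖ e`. A connected subgraph of `Γ'` is a connected subgraph of `Γ` avoiding `e`,
so `C_conn(Γ')` includes into `C_conn(Γ)` by a chain map `ψ`. It has a retraction `φ`, which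
replaces `e` by its parallel `e'` (killing `S` if `e' ∈ S`), and the operator `h` inserting `e'`
into subgraphs containing `e` satisfies `d h + h d = id - ψ φ`: in `d h [S]` the term removing
`e'` returns `[S]`, the term removing `e` is `-ψ φ [S]`, and all other terms cancel against
`h d [S]`. Connectivity is never lost because `e` and `e'` join the same vertices. So `ψ` is a
homotopy equivalence; `φ` is a chain map because `d² = 0` and `ψ` is injective.
-/

open Finset

-- lets `rw` see through `ConnSub` to the underlying subtype
attribute [reducible] ConnSub

section Retraction

variable {R : Type*} [Ring R]

lemma Submodule.nonempty_quotEquiv_of_retraction {M N : Type*} [AddCommGroup M] [Module R M]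
    [AddCommGroup N] [Module R N] {p : Submodule R M} {q : Submodule R N}
    {f : M →ₗ[R] N} {g : N →ₗ[R] M} (hf : p ≤ q.comap f) (hg : q ≤ p.comap g)
    (hfg : f ∘ₗ g = LinearMap.id) (hgf : ∀ x, g (f x) - x ∈ p) :
    Nonempty ((M ⧸ p) ≃ₗ[R] (N ⧸ q)) := by
  refine ⟨LinearEquiv.ofLinearMap (p.mapQ q f hf) (q.mapQ p g hg) ?_ ?_⟩
  · ext y
    simp [← LinearMap.comp_apply f g, hfg]
  · ext x
    simpa [Submodule.Quotient.eq] using hgf x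

variable {C D : ℕ → Type*} [∀ i, AddCommGroup (C i)] [∀ i, Module R (C i)]
  [∀ i, AddCommGroup (D i)] [∀ i, Module R (D i)]

/-- `φ` need not be assumed to be a chain map: see `bdry_comp_retract`. -/
structure IsDeformationRetract (dC : ∀ i, C (i + 1) →ₗ[R] C i)
    (dD : ∀ i, D (i + 1) →ₗ[R] D i) (φ : ∀ i, C i →ₗ[R] D i) (ψ : ∀ i, D i →ₗ[R] C i)
    (h : ∀ i, C i →ₗ[R] C (i + 1)) : Prop where
  bdry_comp_bdry : ∀ i, dC i ∘ₗ dC (i + 1) = 0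
  bdry_comp_incl : ∀ i, dC i ∘ₗ ψ (i + 1) = ψ i ∘ₗ dD i
  retract_comp_incl : ∀ i, φ i ∘ₗ ψ i = LinearMap.id
  homotopy_zero : dC 0 ∘ₗ h 0 = LinearMap.id - ψ 0 ∘ₗ φ 0
  homotopy_succ : ∀ i,
    dC (i + 1) ∘ₗ h (i + 1) + h i ∘ₗ dC i = LinearMap.id - ψ (i + 1) ∘ₗ φ (i + 1)

namespace IsDeformationRetract

variable {dC : ∀ i, C (i + 1) →ₗ[R] C i} {dD : ∀ i, D (i + 1) →ₗ[R] D i}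
  {φ : ∀ i, C i →ₗ[R] D i} {ψ : ∀ i, D i →ₗ[R] C i}
  {h : ∀ i, C i →ₗ[R] C (i + 1)}

lemma incl_retract_apply (hr : IsDeformationRetract dC dD φ ψ h) (i : ℕ) (x : C (i + 1)) :
    ψ (i + 1) (φ (i + 1) x) = x - dC (i + 1) (h (i + 1) x) - h i (dC i x) := by
  have := LinearMap.congr_fun (hr.homotopy_succ i) x
  simp only [LinearMap.add_apply, LinearMap.comp_apply, LinearMap.sub_apply,
    LinearMap.id_apply] at this
  rw [sub_sub, this, sub_sub_cancel]

lemma incl_retract_apply_zero (hr : IsDeformationRetract dC dD φ ψ h) (x : C 0) :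
    ψ 0 (φ 0 x) = x - dC 0 (h 0 x) := by
  have := LinearMap.congr_fun hr.homotopy_zero x
  simp only [LinearMap.comp_apply, LinearMap.sub_apply, LinearMap.id_apply] at this
  rw [this, sub_sub_cancel]

/-- `ψ` is injective, so the chain-map identity for `φ` can be checked after applying `ψ`,
where both sides become `d x - d h d x` by the homotopy formula and `d ∘ d = 0`. -/
lemma bdry_comp_retract (hr : IsDeformationRetract dC dD φ ψ h) (i : ℕ) :
    dD i ∘ₗ φ (i + 1) = φ i ∘ₗ dC i := by
  have hinj : Function.Injective (ψ i) :=
    Function.LeftInverse.injective (g := φ i) (LinearMap.congr_fun (hr.retract_comp_incl i))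
  have hdd : ∀ k y, dC k (dC (k + 1) y) = 0 := fun k =>
    LinearMap.congr_fun (hr.bdry_comp_bdry k)
  ext x
  apply hinj
  have hψ := LinearMap.congr_fun (hr.bdry_comp_incl i) (φ (i + 1) x)
  simp only [LinearMap.comp_apply] at hψ ⊢
  rw [← hψ, hr.incl_retract_apply]
  cases i with
  | zero => simp [hr.incl_retract_apply_zero, hdd]
  | succ j => simp [hr.incl_retract_apply, hdd]

lemma nonempty_homology_zero_equiv (hr : IsDeformationRetract dC dD φ ψ h) :
    Nonempty ((C 0 ⧸ LinearMap.range (dC 0)) ≃ₗ[R] (D 0 ⧸ LinearMap.range (dD 0))) := by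
  refine Submodule.nonempty_quotEquiv_of_retraction (f := φ 0) (g := ψ 0) ?_ ?_
    (hr.retract_comp_incl 0) fun x => ⟨-h 0 x, ?_⟩
  · rintro _ ⟨z, rfl⟩
    exact ⟨φ 1 z, LinearMap.congr_fun (hr.bdry_comp_retract 0) z⟩
  · rintro _ ⟨z, rfl⟩
    exact ⟨ψ 1 z, LinearMap.congr_fun (hr.bdry_comp_incl 0) z⟩
  · rw [hr.incl_retract_apply_zero, map_neg, sub_sub_cancel_left]

lemma nonempty_homology_succ_equiv (hr : IsDeformationRetract dC dD φ ψ h) (i : ℕ) :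
    Nonempty ((LinearMap.ker (dC i) ⧸ (LinearMap.range (dC (i + 1))).comap
        (LinearMap.ker (dC i)).subtype) ≃ₗ[R]
      (LinearMap.ker (dD i) ⧸ (LinearMap.range (dD (i + 1))).comap
        (LinearMap.ker (dD i)).subtype)) := by
  have hφ : ∀ k z, dD k (φ (k + 1) z) = φ k (dC k z) := fun k =>
    LinearMap.congr_fun (hr.bdry_comp_retract k)
  have hψ : ∀ k z, dC k (ψ (k + 1) z) = ψ k (dD k z) := fun k =>
    LinearMap.congr_fun (hr.bdry_comp_incl k)
  refine Submodule.nonempty_quotEquiv_of_retraction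
    (f := (φ (i + 1)).restrict fun x (hx : dC i x = 0) => by simp [LinearMap.mem_ker, hφ, hx])
    (g := (ψ (i + 1)).restrict fun y (hy : dD i y = 0) => by simp [LinearMap.mem_ker, hψ, hy])
    ?_ ?_ ?_ fun x => ⟨-h (i + 1) x, ?_⟩
  · rintro x ⟨z, hz⟩
    exact ⟨φ (i + 2) z, by rw [hφ, hz]; rfl⟩
  · rintro y ⟨z, hz⟩
    exact ⟨ψ (i + 2) z, by rw [hψ, hz]; rfl⟩
  · ext y
    exact LinearMap.congr_fun (hr.retract_comp_incl (i + 1)) y.1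
  · have hx : dC i x = 0 := x.2
    change dC (i + 1) (-h (i + 1) x) = ψ (i + 1) (φ (i + 1) x) - x
    rw [map_neg, hr.incl_retract_apply, hx, map_zero, sub_zero, sub_sub_cancel_left]

end IsDeformationRetract

end Retraction


section Connectivity

variable {ends : E → Sym2 V}

lemma isConn_congr {E' : Type} {ends' : E' → Sym2 V} {S : Finset E} {S' : Finset E'}
    (h : ∀ x y, StepRel ends S x y ↔ StepRel ends' S' x y) :
    IsConn ends S ↔ IsConn ends' S' := by
  have hrel : StepRel ends S = StepRel ends' S' := by
    ext x y
    exact h x y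
  rw [IsConn, IsConn, hrel]

lemma IsConn.mono {S T : Finset E} (hST : S ⊆ T) (hS : IsConn ends S) : IsConn ends T :=
  fun a b =>
    Relation.ReflTransGen.mono (fun _ _ ⟨f, hf, hxy⟩ => ⟨f, hST hf, hxy⟩) _ _ (hS a b)

lemma isConn_map_iff {E' : Type} (j : E' ↪ E) {S : Finset E'} :
    IsConn (ends ∘ j) S ↔ IsConn ends (S.map j) :=
  isConn_congr fun _ _ =>
    ⟨fun ⟨f, hf, hxy⟩ => ⟨j f, mem_map_of_mem j hf, hxy⟩,
      fun ⟨_, hf, hxy⟩ => by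
        obtain ⟨f, hfS, rfl⟩ := mem_map.1 hf
        exact ⟨f, hfS, hxy⟩⟩

variable [DecidableEq E] {S : Finset E} {a b : E}

lemma isConn_erase_of_parallel (hab : ends a = ends b) (hne : a ≠ b) (ha : a ∈ S) :
    IsConn ends (S.erase b) ↔ IsConn ends S :=
  isConn_congr fun _ _ =>
    ⟨fun ⟨f, hf, hxy⟩ => ⟨f, mem_of_mem_erase hf, hxy⟩,
      fun ⟨f, hf, hxy⟩ => by
        by_cases hfb : f = b
        · exact ⟨a, mem_erase.2 ⟨hne, ha⟩, hab.trans (hfb ▸ hxy)⟩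
        · exact ⟨f, mem_erase.2 ⟨hfb, hf⟩, hxy⟩⟩

lemma isConn_insert_of_parallel (hab : ends a = ends b) (hne : a ≠ b) (ha : a ∈ S) :
    IsConn ends (insert b S) ↔ IsConn ends S := by
  by_cases hb : b ∈ S
  · rw [insert_eq_of_mem hb]
  · rw [← isConn_erase_of_parallel hab hne (mem_insert_of_mem ha), erase_insert hb]

end Connectivity

section Sign

lemma neg_one_pow_add_neg_one_pow_of_odd {a b : ℕ} (h : Odd (a + b)) :
    (-1 : ℤ) ^ a + (-1) ^ b = 0 := by
  have hab : (-1 : ℤ) ^ a * (-1) ^ b = -1 := by rw [← pow_add, h.neg_one_pow]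
  rcases neg_one_pow_eq_or ℤ b with hb | hb <;> rw [hb] at hab ⊢ <;> linarith

lemma ite_lt_add_ite_lt [LinearOrder E] {f g : E} (h : f ≠ g) :
    ((if f < g then 1 else 0) + if g < f then 1 else 0) = 1 := by
  rcases h.lt_or_gt with h | h <;> simp [h, h.not_gt]

variable [DecidableEq E] [LinearOrder E] {S : Finset E} {f g : E}

lemma nuEdge_insert_of_notMem (hg : g ∉ S) :
    nuEdge f (insert g S) = nuEdge f S + if g < f then 1 else 0 := by
  unfold nuEdge
  rw [filter_insert]
  split_ifs
  · exact card_insert_of_notMem fun h => hg (mem_filter.1 h).1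
  · rfl

lemma nuEdge_insert_self : nuEdge f (insert f S) = nuEdge f S := by
  simp [nuEdge, filter_insert]

lemma nuEdge_erase_add (hg : g ∈ S) :
    nuEdge f (S.erase g) + (if g < f then 1 else 0) = nuEdge f S := by
  conv_rhs => rw [← insert_erase hg]
  rw [nuEdge_insert_of_notMem (notMem_erase g S)]

end Sign

section Chains

variable (ends : E → Sym2 V) {i : ℕ}

/-- The basis vector `[T]`, or `0` when `T` is not a connected subgraph with `i` edges; with
this convention the formulas below need no side conditions. -/
def connGen (i : ℕ) (T : Finset E) : CConn ends i :=
  if h : T.card = i ∧ IsConn ends T then Finsupp.single (⟨T, h⟩ : ConnSub ends i) 1 else 0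

lemma connGen_val (S : ConnSub ends i) : connGen ends i S.1 = Finsupp.single S 1 :=
  dif_pos S.2

def connLift {M : Type*} [AddCommGroup M] (F : Finset E → M) (i : ℕ) :
    CConn ends i →ₗ[ℤ] M :=
  Finsupp.linearCombination ℤ fun S => F S.1

variable {ends}

lemma connGen_of_card_ne {T : Finset E} (h : T.card ≠ i) : connGen ends i T = 0 :=
  dif_neg fun h' => h h'.1

lemma connGen_of_not_isConn {T : Finset E} (h : ¬IsConn ends T) : connGen ends i T = 0 :=
  dif_neg fun h' => h h'.2

lemma connLift_connGen {M : Type*} [AddCommGroup M] {F : Finset E → M} {T : Finset E}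
    (hT : T.card = i) (hF : ¬IsConn ends T → F T = 0) :
    connLift ends F i (connGen ends i T) = F T := by
  by_cases hc : IsConn ends T
  · rw [connGen_val ends ⟨T, hT, hc⟩, connLift, Finsupp.linearCombination_single, one_smul]
  · rw [connGen_of_not_isConn hc, map_zero, hF hc]

variable [DecidableEq E] [LinearOrder E]

lemma bdry_single (S : ConnSub ends (i + 1)) :
    bdry ends i (Finsupp.single S 1) =
      ∑ f ∈ S.1, (-1 : ℤ) ^ nuEdge f S.1 • connGen ends i (S.1.erase f) := by
  rw [bdry, Finsupp.lsum_single, LinearMap.toSpanSingleton_apply, one_smul,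
    ← sum_attach S.1]
  refine sum_congr rfl fun f _ => ?_
  split_ifs with h
  · rw [connGen, dif_pos ⟨by simp [card_erase_of_mem f.2, S.2.1], h⟩]
  · rw [connGen_of_not_isConn h, smul_zero]

lemma bdry_connGen (T : Finset E) :
    bdry ends i (connGen ends (i + 1) T) =
      ∑ f ∈ T, (-1 : ℤ) ^ nuEdge f T • connGen ends i (T.erase f) := by
  by_cases h : T.card = i + 1 ∧ IsConn ends T
  · rw [connGen_val ends ⟨T, h⟩, bdry_single]
  · rw [connGen, dif_neg h, map_zero, eq_comm]
    refine sum_eq_zero fun f hf => ?_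
    rw [not_and_or] at h
    rcases h with hcard | hconn
    · have := card_pos.2 ⟨f, hf⟩
      rw [connGen_of_card_ne (by rw [card_erase_of_mem hf]; omega), smul_zero]
    · rw [connGen_of_not_isConn fun hc => hconn (hc.mono (erase_subset f T)), smul_zero]

/-- The terms of `d (d [S])` indexed by `(f, g)` and `(g, f)` cancel. -/
lemma bdry_comp_bdry (i : ℕ) : bdry ends i ∘ₗ bdry ends (i + 1) = 0 := by
  ext S : 2
  simp only [LinearMap.comp_apply, LinearMap.zero_apply, Finsupp.lsingle_apply, bdry_single,
    map_sum, map_zsmul, bdry_connGen, smul_sum, smul_smul, ← pow_add]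
  rw [sum_sigma']
  refine sum_involution (fun x _ => (⟨x.2, x.1⟩ : Σ _ : E, E)) (fun ⟨f, g⟩ hx => ?_)
    (fun ⟨f, g⟩ hx _ => ?_) (fun ⟨f, g⟩ hx => ?_) fun _ _ => rfl
  all_goals obtain ⟨hf, hgf, hg⟩ : f ∈ S.1 ∧ g ≠ f ∧ g ∈ S.1 := by simpa using hx
  · have hodd : Odd (nuEdge f S.1 + nuEdge g (S.1.erase f) +
        (nuEdge g S.1 + nuEdge f (S.1.erase g))) := by
      have h1 := nuEdge_erase_add (f := g) hf
      have h2 := nuEdge_erase_add (f := f) hg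
      have h3 := ite_lt_add_ite_lt hgf
      rw [Nat.odd_iff]
      omega
    dsimp only
    rw [erase_right_comm (a := g), ← add_smul, neg_one_pow_add_neg_one_pow_of_odd hodd, zero_smul]
  · simp [hgf]
  · simp [hf, hg, hgf.symm]

end Chains

section Deletion

abbrev deleteEdge (ends : E → Sym2 V) (e : E) : {f // f ≠ e} → Sym2 V :=
  fun f => ends f.1

variable {ends : E → Sym2 V} {e e' : E} {i : ℕ}

lemma isConn_deleteEdge_iff {S : Finset {f // f ≠ e}} :
    IsConn (deleteEdge ends e) S ↔ IsConn ends (S.map (Function.Embedding.subtype _)) :=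
  isConn_map_iff (ends := ends) (Function.Embedding.subtype _)

lemma subtype_map_subtype {p : E → Prop} [DecidablePred p] (S : Finset {f // p f}) :
    (S.map (Function.Embedding.subtype _)).subtype p = S := by
  ext f
  simp [f.2]

lemma notMem_map_subtype_ne (S : Finset {f // f ≠ e}) :
    e ∉ S.map (Function.Embedding.subtype _) :=
  notMem_map_subtype_of_not_property S (not_not.2 rfl)

variable (ends e) in
def deletionIncl (i : ℕ) : CConn (deleteEdge ends e) i →ₗ[ℤ] CConn ends i :=
  connLift _ (fun T => connGen ends i (T.map (Function.Embedding.subtype _))) i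

lemma deletionIncl_connGen (T : Finset {f // f ≠ e}) :
    deletionIncl ends e i (connGen _ i T) =
      connGen ends i (T.map (Function.Embedding.subtype _)) := by
  by_cases hT : T.card = i
  · exact connLift_connGen hT fun hc => connGen_of_not_isConn (mt isConn_deleteEdge_iff.2 hc)
  · rw [connGen_of_card_ne hT, map_zero, connGen_of_card_ne]
    rwa [card_map]

variable [LinearOrder E]

lemma map_subtype_ne (T : Finset E) :
    (T.subtype (· ≠ e)).map (Function.Embedding.subtype _) = T.erase e := by
  rw [subtype_map, filter_ne']

lemma nuEdge_map_subtype (S : Finset {f // f ≠ e}) (f : {f // f ≠ e}) :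
    nuEdge f.1 (S.map (Function.Embedding.subtype _)) = nuEdge f S := by
  rw [nuEdge, filter_map, card_map]
  rfl

lemma bdry_comp_deletionIncl (i : ℕ) :
    bdry ends i ∘ₗ deletionIncl ends e (i + 1) =
      deletionIncl ends e i ∘ₗ bdry (deleteEdge ends e) i := by
  ext S : 2
  simp only [LinearMap.comp_apply, Finsupp.lsingle_apply]
  rw [← connGen_val, deletionIncl_connGen, bdry_connGen, bdry_connGen, map_sum, sum_map]
  refine sum_congr rfl fun f _ => ?_
  rw [map_zsmul, deletionIncl_connGen, map_erase, Function.Embedding.coe_subtype,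
    nuEdge_map_subtype]

variable (ends e e')

/-- On a subgraph containing `e`, the edge `e` is traded for its parallel `e'`, with the sign of
inserting `e'` and then removing `e`; the term vanishes when `e' ∈ S`, since `connGen` then sees
the wrong cardinality. -/
def deletionRetract (i : ℕ) : CConn ends i →ₗ[ℤ] CConn (deleteEdge ends e) i :=
  connLift ends (fun T =>
    if e ∈ T then
      -(-1 : ℤ) ^ (nuEdge e' T + nuEdge e (insert e' T)) •
        connGen _ i ((insert e' T).subtype (· ≠ e))
    else connGen _ i (T.subtype (· ≠ e))) i

/-- Vanishes on `[S]` when `e' ∈ S`, since `insert e' S = S` has the wrong cardinality. -/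
def deletionHomotopy (i : ℕ) : CConn ends i →ₗ[ℤ] CConn ends (i + 1) :=
  connLift ends (fun T =>
    if e ∈ T then (-1 : ℤ) ^ nuEdge e' T • connGen ends (i + 1) (insert e' T) else 0) i

variable {ends e e'}

lemma deletionRetract_connGen_of_notMem {T : Finset E} (he : e ∉ T) (hT : T.card = i) :
    deletionRetract ends e e' i (connGen ends i T) = connGen _ i (T.subtype (· ≠ e)) := by
  refine (connLift_connGen hT fun hc => ?_).trans (if_neg he)
  rw [if_neg he, connGen_of_not_isConn]
  rwa [isConn_deleteEdge_iff, map_subtype_ne, erase_eq_of_notMem he]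

lemma deletionRetract_comp_deletionIncl (i : ℕ) :
    deletionRetract ends e e' i ∘ₗ deletionIncl ends e i = LinearMap.id := by
  ext S : 2
  simp only [LinearMap.comp_apply, Finsupp.lsingle_apply, LinearMap.id_apply]
  rw [← connGen_val, deletionIncl_connGen, deletionRetract_connGen_of_notMem
    (notMem_map_subtype_ne _) ((card_map _).trans S.2.1), subtype_map_subtype]

lemma deletionIncl_deletionRetract_single (S : ConnSub ends i) :
    deletionIncl ends e i (deletionRetract ends e e' i (Finsupp.single S 1)) =
      if e ∈ S.1 then
        -(-1 : ℤ) ^ (nuEdge e' S.1 + nuEdge e (insert e' S.1)) •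
          connGen ends i ((insert e' S.1).erase e)
      else Finsupp.single S 1 := by
  rw [← connGen_val, deletionRetract, connLift_connGen S.2.1 (absurd S.2.2)]
  split_ifs with he
  · rw [map_zsmul, deletionIncl_connGen, map_subtype_ne]
  · rw [deletionIncl_connGen, map_subtype_ne, erase_eq_of_notMem he]

lemma deletionHomotopy_connGen (hsame : ends e = ends e') (hne : e ≠ e') {T : Finset E}
    (hT : T.card = i) :
    deletionHomotopy ends e e' i (connGen ends i T) =
      if e ∈ T then (-1 : ℤ) ^ nuEdge e' T • connGen ends (i + 1) (insert e' T) else 0 := by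
  refine connLift_connGen hT fun hc => ?_
  split_ifs with he
  · rw [connGen_of_not_isConn (mt (isConn_insert_of_parallel hsame hne he).1 hc), smul_zero]
  · rfl

lemma bdry_comp_deletionHomotopy_zero :
    bdry ends 0 ∘ₗ deletionHomotopy ends e e' 0 =
      LinearMap.id - deletionIncl ends e 0 ∘ₗ deletionRetract ends e e' 0 := by
  ext S : 2
  have he : e ∉ S.1 := by simp [card_eq_zero.1 S.2.1]
  simp only [LinearMap.comp_apply, Finsupp.lsingle_apply, LinearMap.sub_apply, LinearMap.id_apply]
  rw [deletionIncl_deletionRetract_single, if_neg he, sub_self, deletionHomotopy, ← connGen_val,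
    connLift_connGen S.2.1 (absurd S.2.2), if_neg he, map_zero]

lemma deletionHomotopy_bdry_single (hsame : ends e = ends e') (hne : e ≠ e')
    (S : ConnSub ends (i + 1)) :
    deletionHomotopy ends e e' i (bdry ends i (Finsupp.single S 1)) =
      ∑ f ∈ S.1, (-1 : ℤ) ^ nuEdge f S.1 • if e ∈ S.1.erase f then
        (-1 : ℤ) ^ nuEdge e' (S.1.erase f) • connGen ends (i + 1) (insert e' (S.1.erase f))
      else 0 := by
  rw [bdry_single, map_sum]
  refine sum_congr rfl fun f hf => ?_
  rw [map_zsmul, deletionHomotopy_connGen hsame hne (by rw [card_erase_of_mem hf, S.2.1]; rfl)]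

/-- Adding `e'` then removing `f` cancels removing `f` then adding `e'`. -/
lemma bdry_deletionHomotopy_add_deletionHomotopy_bdry_term {S : Finset E} {f : E}
    (he : e ∈ S) (he' : e' ∉ S) (hf : f ∈ S) (hfe : f ≠ e) :
    (-1 : ℤ) ^ nuEdge e' S • (-1 : ℤ) ^ nuEdge f (insert e' S) •
        connGen ends (i + 1) ((insert e' S).erase f) +
      (-1 : ℤ) ^ nuEdge f S • (if e ∈ S.erase f then
        (-1 : ℤ) ^ nuEdge e' (S.erase f) • connGen ends (i + 1) (insert e' (S.erase f))
      else 0) = 0 := by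
  have hfe' : f ≠ e' := fun h => he' (h ▸ hf)
  have hodd : Odd (nuEdge e' S + nuEdge f (insert e' S) +
      (nuEdge f S + nuEdge e' (S.erase f))) := by
    have h1 := nuEdge_insert_of_notMem (f := f) he'
    have h2 := nuEdge_erase_add (f := e') hf
    have h3 := ite_lt_add_ite_lt hfe'
    rw [Nat.odd_iff]
    omega
  rw [if_pos (mem_erase.2 ⟨Ne.symm hfe, he⟩), erase_insert_of_ne (Ne.symm hfe'), smul_smul,
    smul_smul, ← pow_add, ← pow_add, ← add_smul, neg_one_pow_add_neg_one_pow_of_odd hodd,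
    zero_smul]

lemma bdry_comp_deletionHomotopy_succ (hsame : ends e = ends e') (hne : e ≠ e') (i : ℕ) :
    bdry ends (i + 1) ∘ₗ deletionHomotopy ends e e' (i + 1) +
        deletionHomotopy ends e e' i ∘ₗ bdry ends i =
      LinearMap.id - deletionIncl ends e (i + 1) ∘ₗ deletionRetract ends e e' (i + 1) := by
  ext S : 2
  simp only [LinearMap.comp_apply, Finsupp.lsingle_apply, LinearMap.add_apply,
    LinearMap.sub_apply, LinearMap.id_apply]
  have hHS := deletionHomotopy_connGen hsame hne S.2.1
  rw [connGen_val] at hHS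
  rw [hHS, deletionHomotopy_bdry_single hsame hne, deletionIncl_deletionRetract_single]
  by_cases he : e ∈ S.1
  swap
  · rw [if_neg he, if_neg he, map_zero, zero_add, sub_self]
    exact sum_eq_zero fun f _ => by rw [if_neg fun h => he (mem_of_mem_erase h), smul_zero]
  rw [if_pos he, if_pos he]
  by_cases he' : e' ∈ S.1
  · -- only the term `f = e'` survives: it gives back `[S]`
    rw [insert_eq_of_mem he', connGen_of_card_ne (by rw [S.2.1]; omega), smul_zero, map_zero,
      zero_add, connGen_of_card_ne (by rw [card_erase_of_mem he, S.2.1]; omega), smul_zero,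
      sub_zero, sum_eq_single_of_mem e' he' fun f hf hfe' => ?_]
    · have hnu : nuEdge e' (S.1.erase e') = nuEdge e' S.1 := by
        simpa using nuEdge_erase_add (f := e') he'
      rw [if_pos (mem_erase.2 ⟨hne, he⟩), insert_erase he', connGen_val, smul_smul, hnu,
        ← pow_add, Even.neg_one_pow ⟨_, rfl⟩, one_smul]
    · split_ifs
      · rw [insert_eq_of_mem (mem_erase.2 ⟨Ne.symm hfe', he'⟩),
          connGen_of_card_ne (by rw [card_erase_of_mem hf, S.2.1]; omega), smul_zero, smul_zero]
      · rw [smul_zero]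
  · -- the term `f = e'` of `d h [S]` gives back `[S]`, the term `f = e` gives `ψ φ [S]`
    rw [map_zsmul, bdry_connGen, sum_insert he', erase_insert he', connGen_val,
      nuEdge_insert_self, smul_add, smul_smul, ← pow_add, Even.neg_one_pow ⟨_, rfl⟩, one_smul,
      smul_sum, add_assoc, ← sum_add_distrib, neg_smul, sub_neg_eq_add,
      sum_eq_single_of_mem e he fun f hf hfe =>
        bdry_deletionHomotopy_add_deletionHomotopy_bdry_term he he' hf hfe]
    rw [if_neg (notMem_erase e S.1), smul_zero, add_zero, smul_smul, ← pow_add]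

end Deletion

lemma isDeformationRetract_deletion [LinearOrder E] {ends : E → Sym2 V} {e e' : E}
    (hsame : ends e = ends e') (hne : e ≠ e') :
    IsDeformationRetract (bdry ends) (bdry (deleteEdge ends e)) (deletionRetract ends e e')
      (deletionIncl ends e) (deletionHomotopy ends e e') where
  bdry_comp_bdry := bdry_comp_bdry
  bdry_comp_incl := bdry_comp_deletionIncl
  retract_comp_incl := deletionRetract_comp_deletionIncl
  homotopy_zero := bdry_comp_deletionHomotopy_zero
  homotopy_succ := bdry_comp_deletionHomotopy_succ hsame hne

theorem homology_invariant_of_multiple_edge_general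
    [LinearOrder E]
    (ends : E → Sym2 V)
    (e e' : E) (hne : e ≠ e') (hsame : ends e = ends e') :
    Nonempty (ConnH0 ends ≃ₗ[ℤ] ConnH0 (fun f : {f : E // f ≠ e} => ends f.1)) ∧
      ∀ i : ℕ,
        Nonempty (ConnH ends i ≃ₗ[ℤ] ConnH (fun f : {f : E // f ≠ e} => ends f.1) i) :=
  ⟨(isDeformationRetract_deletion hsame hne).nonempty_homology_zero_equiv,
    (isDeformationRetract_deletion hsame hne).nonempty_homology_succ_equiv⟩

theorem homology_invariant_of_multiple_edge
    [Fintype V] [DecidableEq V] [Fintype E] [LinearOrder E]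
    (ends : E → Sym2 V) (hconn : IsConn ends (Finset.univ : Finset E))
    (e e' : E) (hne : e ≠ e') (hsame : ends e = ends e') :
    Nonempty (ConnH0 ends ≃ₗ[ℤ] ConnH0 (fun f : {f : E // f ≠ e} => ends f.1)) ∧
      ∀ i : ℕ,
        Nonempty (ConnH ends i ≃ₗ[ℤ] ConnH (fun f : {f : E // f ≠ e} => ends f.1) i) :=
  homology_invariant_of_multiple_edge_general ends e e' hne hsame

end
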